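/- arXiv:2511.19565 — 4 statements merged into one kernel-verified Lean document; each statement's English description precedes it below -/
import Mathlib

section
/- For the Gödel-style translation γ from HT to classical logic (defined recursively by: γF = F for atomic F; γ(¬F) = ¬F'; γ(F ∧ G) = γF ∧ γG; γ(F ∨ G) = γF ∨ γG; γ(F → G) = (γF → γG) ∧ (F' → G'); where F' replaces every atom p by a fresh primed atom p'), the following holds: for every HT-interpretation ⟨H,T⟩ of a propositional signature and every formula F, the classical interpretation that makes p true iff p ∈ H and p' true iff p ∈ T satisfies γF if and only if ⟨H,T⟩ satisfies F at the 'here' world. -/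
inductive PropForm (A : Type) : Type
  | atom : A → PropForm A
  | bot : PropForm A
  | and : PropForm A → PropForm A → PropForm A
  | or : PropForm A → PropForm A → PropForm A
  | imp : PropForm A → PropForm A → PropForm A

def clSat {A : Type} (T : Set A) : PropForm A → Prop
  | .atom p => p ∈ T
  | .bot => False
  | .and F G => clSat T F ∧ clSat T G
  | .or F G => clSat T F ∨ clSat T G
  | .imp F G => clSat T F → clSat T G

def htSat {A : Type} (H T : Set A) : PropForm A → Prop
  | .atom p => p ∈ H
  | .bot => False
  | .and F G => htSat H T F ∧ htSat H T G
  | .or F G => htSat H T F ∨ htSat H T G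
  | .imp F G => (htSat H T F → htSat H T G) ∧ (clSat T F → clSat T G)

/-- `F'`: the result of replacing every atom `p` by its primed copy `p'`
(the primed signature is `A ⊕ A`, with `Sum.inl p` standing for `p`
and `Sum.inr p` for `p'`). -/
def primeF {A : Type} : PropForm A → PropForm (A ⊕ A)
  | .atom p => .atom (Sum.inr p)
  | .bot => .bot
  | .and F G => .and (primeF F) (primeF G)
  | .or F G => .or (primeF F) (primeF G)
  | .imp F G => .imp (primeF F) (primeF G)

/-- The Gödel-style translation γ from HT to classical logic.
(Since ¬F abbreviates F → ⊥, the clause for ¬ is subsumed by the one for →.) -/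
def gamma {A : Type} : PropForm A → PropForm (A ⊕ A)
  | .atom p => .atom (Sum.inl p)
  | .bot => .bot
  | .and F G => .and (gamma F) (gamma G)
  | .or F G => .or (gamma F) (gamma G)
  | .imp F G => .and (.imp (gamma F) (gamma G)) (.imp (primeF F) (primeF G))

/-- The classical interpretation induced by the HT-interpretation ⟨H,T⟩:
`p` is true iff `p ∈ H`, and `p'` is true iff `p ∈ T`. -/
def induced {A : Type} (H T : Set A) : Set (A ⊕ A) :=
  fun x => Sum.elim (fun p => p ∈ H) (fun p => p ∈ T) x

theorem prime_correct {A : Type} (H T : Set A) (F : PropForm A) :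
    clSat (induced H T) (primeF F) ↔ clSat T F := by
  induction F with
  | atom p => exact Iff.rfl
  | bot => exact Iff.rfl
  | and F G ihF ihG => exact and_congr ihF ihG
  | or F G ihF ihG => exact or_congr ihF ihG
  | imp F G ihF ihG => exact imp_congr ihF ihG

theorem ht_imp_cl {A : Type} (H T : Set A) (hsub : H ⊆ T) (F : PropForm A) :
    htSat H T F → clSat T F := by
  induction F with
  | atom p => exact fun h => hsub h
  | bot => exact id
  | and F G ihF ihG => exact fun ⟨a,b⟩ => ⟨ihF a, ihG b⟩
  | or F G ihF ihG => exact fun h => h.elim (fun a => Or.inl (ihF a)) (fun b => Or.inr (ihG b))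
  | imp F G ihF ihG => exact fun h => h.2

/-- The induced classical interpretation satisfies γF iff ⟨H,T⟩ satisfies F at "here". -/
theorem gamma_correct {A : Type} (H T : Set A) (hsub : H ⊆ T) (F : PropForm A) :
    clSat (induced H T) (gamma F) ↔ htSat H T F := by
  induction F with
  | atom p => exact Iff.rfl
  | bot => exact Iff.rfl
  | and F G ihF ihG => exact and_congr ihF ihG
  | or F G ihF ihG => exact or_congr ihF ihG
  | imp F G ihF ihG =>
    constructor
    · intro ⟨h1, h2⟩
      exact ⟨fun a => ihG.mp (h1 (ihF.mpr a)),
        fun a => (prime_correct H T G).mp (h2 ((prime_correct H T F).mpr a))⟩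
    · intro ⟨h1, h2⟩
      exact ⟨fun a => ihG.mpr (h1 (ihF.mp a)),
        fun a => (prime_correct H T G).mpr (h2 ((prime_correct H T F).mp a))⟩
end

section
/- Let F : α → Prop be a predicate on a linearly ordered type α, and let n be a positive natural number. Then there exist at least n+1 elements satisfying F (i.e., there is an injective-image set of size n+1, equivalently pairwise distinct x₁,…,x_{n+1} all satisfying F) if and only if there exists an element u with F u together with at least n pairwise distinct elements w all satisfying F and all strictly greater than u. -/
/-- There exist at least `k` pairwise distinct elements satisfying `F`. -/
def AtLeast {α : Type*} (k : ℕ) (F : α → Prop) : Prop :=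
  ∃ f : Fin k → α, Function.Injective f ∧ ∀ i, F (f i)

/-- Formula (9): for positive n, ∃_{≥n+1} X F ↔ ∃U (F U ∧ ∃_{≥n} W (U < W ∧ F W)). -/
theorem atLeast_succ_iff {α : Type*} [LinearOrder α] (F : α → Prop) (n : ℕ) (hn : 0 < n) :
    AtLeast (n + 1) F ↔
      ∃ u, F u ∧ ∃ f : Fin n → α, Function.Injective f ∧ ∀ i, u < f i ∧ F (f i) := by
  constructor
  · rintro ⟨f, hinj, hF⟩
    set s : Finset α := Finset.univ.image f with hs
    have hcard : s.card = n + 1 := by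
      rw [hs, Finset.card_image_of_injective _ hinj, Finset.card_univ, Fintype.card_fin]
    have hne : s.Nonempty := Finset.card_pos.mp (by omega)
    set u := s.min' hne with hu
    have huF : F u := by
      have : u ∈ s := s.min'_mem hne
      rw [hs] at this
      obtain ⟨i, _, hi⟩ := Finset.mem_image.mp this
      exact hi ▸ hF i
    set t := s.erase u with ht
    have htcard : t.card = n := by
      rw [ht, Finset.card_erase_of_mem (s.min'_mem hne), hcard]
      omega
    refine ⟨u, huF, fun i => ((Finset.equivFinOfCardEq htcard).symm i : α), ?_, ?_⟩
    · intro a b hab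
      exact (Finset.equivFinOfCardEq htcard).symm.injective (Subtype.ext hab)
    · intro i
      set x : α := ((Finset.equivFinOfCardEq htcard).symm i : α) with hxdef
      have hx : x ∈ t := ((Finset.equivFinOfCardEq htcard).symm i).2
      have hxs : x ∈ s := Finset.mem_of_mem_erase hx
      have hxu : x ≠ u := Finset.ne_of_mem_erase hx
      show u < x ∧ F x
      constructor
      · exact lt_of_le_of_ne (s.min'_le x hxs) (Ne.symm hxu)
      · rw [hs] at hxs
        obtain ⟨j, _, hj⟩ := Finset.mem_image.mp hxs
        exact hj ▸ hF j
  · rintro ⟨u, huF, f, hinj, hf⟩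
    refine ⟨Fin.cases u f, ?_, ?_⟩
    · intro a b
      refine Fin.cases ?_ ?_ a
      · refine Fin.cases ?_ ?_ b
        · intro _; rfl
        · intro j hab
          simp only [Fin.cases_zero, Fin.cases_succ] at hab
          exact absurd hab.symm (ne_of_gt (hf j).1)
      · intro i
        refine Fin.cases ?_ ?_ b
        · intro hab
          simp only [Fin.cases_zero, Fin.cases_succ] at hab
          exact absurd hab (ne_of_gt (hf i).1)
        · intro j hab
          simp only [Fin.cases_succ] at hab
          exact congrArg Fin.succ (hinj hab)
    · intro i
      refine Fin.cases ?_ ?_ i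
      · simpa using huF
      · intro j; simpa using (hf j).2
end

section
/- On a linear order with Start as defined: for every x and every n > 0, if x ≠ a and Start F x (n+1), then Start (fun y => F y ∧ y ≠ a) x n. -/
/-!
Induct on `n`. Write `Start F x (n + 2)` as `F x` together with a witness `u > x` satisfying
`Start F u (n + 1)`. If `u ≠ a`, the induction hypothesis applies at `u`. If `u = a`, unfold once
more to get `w > a` with `Start F w n`; every point from `w` on lies strictly above `a`, so there
`F` and `fun y => F y ∧ y ≠ a` agree and `w` serves as the witness for `x`.
-/

theorem start_mono_of_forall_le {α : Type*} [LinearOrder α]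
    {Start : (α → Prop) → α → ℤ → Prop}
    (h1 : ∀ (P : α → Prop) x, Start P x 1 ↔ P x)
    (hsucc : ∀ (P : α → Prop) x (n : ℤ), 1 ≤ n →
      (Start P x (n + 1) ↔ P x ∧ ∃ u, x < u ∧ Start P u n))
    {P Q : α → Prop} {n : ℤ} (hn : 1 ≤ n) {x : α} (hPQ : ∀ y, x ≤ y → P y → Q y)
    (hS : Start P x n) : Start Q x n := by
  induction n, hn using Int.leInduction generalizing x with
  | base => exact (h1 Q x).2 (hPQ x le_rfl ((h1 P x).1 hS))
  | succ n hn ih =>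
    obtain ⟨hPx, u, hxu, hSu⟩ := (hsucc P x n hn).1 hS
    exact (hsucc Q x n hn).2
      ⟨hPQ x le_rfl hPx, u, hxu, ih (fun y huy => hPQ y (hxu.le.trans huy)) hSu⟩

theorem start_restrict_of_ne_general {α : Type*} [LinearOrder α]
    (Start : (α → Prop) → α → ℤ → Prop)
    (h1 : ∀ (P : α → Prop) x, Start P x 1 ↔ P x)
    (hsucc : ∀ (P : α → Prop) x (n : ℤ), 1 ≤ n →
      (Start P x (n + 1) ↔ P x ∧ ∃ u, x < u ∧ Start P u n))
    (F : α → Prop) (a : α) :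
    ∀ x (n : ℤ), 0 < n → x ≠ a → Start F x (n + 1) →
      Start (fun y => F y ∧ y ≠ a) x n := by
  intro x n hn
  replace hn : 1 ≤ n := hn
  induction n, hn using Int.leInduction generalizing x with
  | base =>
    intro hxa hS
    exact (h1 _ x).2 ⟨((hsucc F x 1 le_rfl).1 hS).1, hxa⟩
  | succ n hn ih =>
    intro hxa hS
    obtain ⟨hFx, u, hxu, hSu⟩ := (hsucc F x (n + 1) (by omega)).1 hS
    refine (hsucc _ x n hn).2 ⟨⟨hFx, hxa⟩, ?_⟩
    by_cases hua : u = a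
    · subst hua
      obtain ⟨-, w, huw, hSw⟩ := (hsucc F u n hn).1 hSu
      exact ⟨w, hxu.trans huw, start_mono_of_forall_le h1 hsucc hn
        (fun y hwy hFy => ⟨hFy, (huw.trans_le hwy).ne'⟩) hSw⟩
    · exact ⟨u, hxu, ih u hua hSu⟩

/-- Lemma (18): for n > 0, if x ≠ a and Start F x (n+1) then Start (F ∧ ·≠a) x n. -/
theorem start_restrict_of_ne {α : Type*} [LinearOrder α]
    (Start : (α → Prop) → α → ℤ → Prop)
    (h0 : ∀ (P : α → Prop) x (n : ℤ), n ≤ 0 → Start P x n)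
    (h1 : ∀ (P : α → Prop) x, Start P x 1 ↔ P x)
    (hsucc : ∀ (P : α → Prop) x (n : ℤ), 1 ≤ n →
      (Start P x (n + 1) ↔ P x ∧ ∃ u, x < u ∧ Start P u n))
    (F : α → Prop) (a : α) :
    ∀ x (n : ℤ), 0 < n → x ≠ a → Start F x (n + 1) →
      Start (fun y => F y ∧ y ≠ a) x n :=
  start_restrict_of_ne_general Start h1 hsucc F a
end

section
/- On a linear order with Start as defined: for every x and every n > 0, if x < a, F a, and Start (fun y => F y ∧ y ≠ a) x n, then Start F x (n+1). -/
/-- Lemma (19): for n > 0, if x < a, F a, and Start (F ∧ ·≠a) x n,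
then Start F x (n+1). -/
theorem start_extend_of_lt {α : Type*} [LinearOrder α]
    (Start : (α → Prop) → α → ℤ → Prop)
    (h0 : ∀ (P : α → Prop) x (n : ℤ), n ≤ 0 → Start P x n)
    (h1 : ∀ (P : α → Prop) x, Start P x 1 ↔ P x)
    (hsucc : ∀ (P : α → Prop) x (n : ℤ), 1 ≤ n →
      (Start P x (n + 1) ↔ P x ∧ ∃ u, x < u ∧ Start P u n))
    (F : α → Prop) (a : α) (hFa : F a) :
    ∀ x (n : ℤ), 0 < n → x < a → Start (fun y => F y ∧ y ≠ a) x n →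
      Start F x (n + 1) := by
  set P : α → Prop := fun y => F y ∧ y ≠ a with hP
  -- monotonicity: Start P u n → Start F u n
  have mono : ∀ (n : ℤ), ∀ u, Start P u n → Start F u n := by
    have key : ∀ (n : ℤ), 1 ≤ n → ∀ u, Start P u n → Start F u n := by
      refine Int.le_induction ?_ ?_
      · intro u hu; exact (h1 F u).mpr ((h1 P u).mp hu).1
      · intro m hm ih u hu
        obtain ⟨hPu, v, huv, hv⟩ := (hsucc P u m hm).mp hu
        exact (hsucc F u m hm).mpr ⟨hPu.1, v, huv, ih v hv⟩
    intro n u hu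
    rcases le_or_gt n 0 with hn | hn
    · exact h0 F u n hn
    · exact key n hn u hu
  -- a Start P at level ≥ 1 implies P at the point
  have head : ∀ (n : ℤ), 1 ≤ n → ∀ u, Start P u n → P u := by
    intro n hn u hu
    rcases eq_or_lt_of_le hn with h | h
    · exact (h1 P u).mp (h ▸ hu)
    · have hm2 : 1 ≤ n - 1 := by omega
      have := (hsucc P u (n - 1) hm2).mp (by simpa using hu)
      exact this.1
  have key : ∀ (n : ℤ), 1 ≤ n → ∀ x, x < a → Start P x n → Start F x (n + 1) := by
    refine Int.le_induction ?_ ?_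
    · intro x hxa hx
      obtain ⟨hFx, _⟩ := (h1 P x).mp hx
      exact (hsucc F x 1 le_rfl).mpr ⟨hFx, a, hxa, (h1 F a).mpr hFa⟩
    · intro m hm ih x hxa hx
      obtain ⟨hPx, u, hxu, hu⟩ := (hsucc P x m hm).mp hx
      have hPu : P u := head m hm u hu
      rcases lt_trichotomy u a with h | h | h
      · exact (hsucc F x (m + 1) (by omega)).mpr ⟨hPx.1, u, hxu, ih u h hu⟩
      · exact absurd h hPu.2
      · refine (hsucc F x (m + 1) (by omega)).mpr ⟨hPx.1, a, hxa, ?_⟩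
        exact (hsucc F a m hm).mpr ⟨hFa, u, h, mono m u hu⟩
  intro x n hn hxa hx
  exact key n hn x hxa hx
end
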